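/- Let G = (V, E) be a finite simple graph with an operator realization and let K_s be a simplicial clique of G. For j ∈ K_s set K_j = {j} ∪ (N(j) \ K_s), where N(j) is the set of neighbors of j. Then for every k ≥ 1: Q_k(G) = Q_k(G[V \ K_s]) + Σ_{j ∈ K_s} Q_{k−1}(G[V \ K_j])·h(j). (Lemma 20.) -/

import Mathlib

open scoped Classical

universe u

/-- `S` is an independent set of `G`. -/
def IsIndep {V : Type u} (G : SimpleGraph V) (S : Finset V) : Prop :=
  ∀ u ∈ S, ∀ v ∈ S, ¬ G.Adj u v

/-- The product `h(S) = ∏_{v ∈ S} h v`, well defined when the factors pairwise commute. -/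
noncomputable def hProd {V : Type u} {d : ℕ} (h : V → Matrix (Fin d) (Fin d) ℂ)
    (S : Finset V) : Matrix (Fin d) (Fin d) ℂ :=
  if hc : (S : Set V).Pairwise fun u v => Commute (h u) (h v) then S.noncommProd h hc
  else 0

/-- The independent-set charge `Q_k(G[U])`: the sum of `h(S)` over all independent sets
`S ⊆ U` of `G` with `|S| = k`. -/
noncomputable def charge {V : Type u} {d : ℕ} [Fintype V] [DecidableEq V]
    (G : SimpleGraph V) (h : V → Matrix (Fin d) (Fin d) ℂ) (U : Finset V) (k : ℕ) :
    Matrix (Fin d) (Fin d) ℂ :=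
  ∑ S ∈ Finset.univ.filter (fun S : Finset V => S ⊆ U ∧ IsIndep G S ∧ S.card = k),
    hProd h S

/-- The closed neighborhood of a vertex `j`, as a finset. -/
noncomputable def closedNbhdF {V : Type u} [Fintype V] [DecidableEq V]
    (G : SimpleGraph V) (j : V) : Finset V :=
  insert j (Finset.univ.filter fun v => G.Adj j v)

/-- `K` is a simplicial clique of `G`: a clique such that, for every `j ∈ K`, the set of
neighbors of `j` outside `K` is a clique. -/
def IsSimplicialClique {V : Type u} (G : SimpleGraph V) (K : Finset V) : Prop :=
  (∀ u ∈ K, ∀ v ∈ K, u ≠ v → G.Adj u v) ∧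
    ∀ j ∈ K, ∀ u v : V, u ∉ K → v ∉ K → u ≠ v → G.Adj j u → G.Adj j v → G.Adj u v

section Aux

variable {V : Type u} {d : ℕ} {G : SimpleGraph V} {h : V → Matrix (Fin d) (Fin d) ℂ}

lemma indep_pairwise_commute
    (hcomm : ∀ u v, u ≠ v → ¬ G.Adj u v → h u * h v = h v * h u)
    {S : Finset V} (hS : IsIndep G S) :
    (S : Set V).Pairwise fun u v => Commute (h u) (h v) :=
  fun u hu v hv huv => hcomm u v huv (hS u hu v hv)

lemma hProd_indep
    (hcomm : ∀ u v, u ≠ v → ¬ G.Adj u v → h u * h v = h v * h u)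
    {S : Finset V} (hS : IsIndep G S) :
    hProd h S = S.noncommProd h (indep_pairwise_commute hcomm hS) :=
  dif_pos _

lemma indep_subset {S T : Finset V} (hT : T ⊆ S) (hS : IsIndep G S) : IsIndep G T :=
  fun u hu v hv => hS u (hT hu) v (hT hv)

lemma indep_insert [DecidableEq V] {S : Finset V} {a : V}
    (hS : IsIndep G S) (ha : ∀ v ∈ S, ¬ G.Adj a v) : IsIndep G (insert a S) := by
  intro u hu v hv had
  rcases Finset.mem_insert.1 hu with h1 | h1 <;> rcases Finset.mem_insert.1 hv with h2 | h2
  · subst h1; subst h2; exact G.loopless.irrefl _ had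
  · subst h1; exact ha v h2 had
  · subst h2; exact ha u h1 had.symm
  · exact hS u h1 v h2 had

lemma hProd_insert [DecidableEq V]
    (hcomm : ∀ u v, u ≠ v → ¬ G.Adj u v → h u * h v = h v * h u)
    {S : Finset V} {a : V} (ha : a ∉ S) (hS : IsIndep G (insert a S)) :
    hProd h (insert a S) = hProd h S * h a := by
  rw [hProd_indep hcomm hS,
    hProd_indep hcomm (indep_subset (Finset.subset_insert a S) hS)]
  exact Finset.noncommProd_insert_of_notMem' _ _ _ _ ha

end Aux

/-- Lemma 20: the simplicial-clique recursion for the independent-set charges,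
`Q_k(G) = Q_k(G \ K_s) + Σ_{j ∈ K_s} Q_{k−1}(G \ K_j)·h(j)`, where
`K_j = {j} ∪ (N(j) \ K_s)`. -/
theorem charge_simplicialClique_recursion {V : Type u} [Fintype V] [DecidableEq V]
    (G : SimpleGraph V) (d : ℕ) (hd : 0 < d)
    (h : V → Matrix (Fin d) (Fin d) ℂ) (b : V → ℝ) (hb : ∀ v, b v ≠ 0)
    (hsq : ∀ v, h v * h v = ((b v : ℂ)) ^ 2 • (1 : Matrix (Fin d) (Fin d) ℂ))
    (hanti : ∀ u v, G.Adj u v → h u * h v = -(h v * h u))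
    (hcomm : ∀ u v, u ≠ v → ¬ G.Adj u v → h u * h v = h v * h u)
    (Ks : Finset V) (hKs : IsSimplicialClique G Ks)
    (k : ℕ) (hk : 1 ≤ k) :
    charge G h Finset.univ k =
      charge G h (Finset.univ \ Ks) k +
        ∑ j ∈ Ks,
          charge G h
            (Finset.univ \ (insert j ((Finset.univ.filter fun v => G.Adj j v) \ Ks)))
            (k - 1) * h j := by
  classical
  obtain ⟨hclq, -⟩ := hKs
  set Kj : V → Finset V :=
    fun j => insert j ((Finset.univ.filter fun v => G.Adj j v) \ Ks) with hKjdef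
  -- membership in `Kj j`
  have hmemKj : ∀ j v : V, v ∈ Kj j ↔ v = j ∨ (G.Adj j v ∧ v ∉ Ks) := by
    intro j v; simp [hKjdef]
  -- uniqueness of the `Ks`-element of an independent set
  have huniq : ∀ {S : Finset V}, IsIndep G S → ∀ {u v : V},
      u ∈ S → u ∈ Ks → v ∈ S → v ∈ Ks → u = v := by
    intro S hS u v hu hu' hv hv'
    by_contra hne
    exact hS u hu v hv (hclq u hu' v hv' hne)
  have hk1 : k - 1 + 1 = k := Nat.succ_pred_eq_of_pos hk
  -- the family of independent `k`-sets and, for each `j`, of independent `(k-1)`-sets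
  -- avoiding `Kj j`
  set F : Finset (Finset V) := Finset.univ.filter
    (fun S : Finset V => S ⊆ Finset.univ ∧ IsIndep G S ∧ S.card = k) with hF
  set F' : V → Finset (Finset V) := fun j => Finset.univ.filter
    (fun S : Finset V => S ⊆ Finset.univ \ Kj j ∧ IsIndep G S ∧ S.card = k - 1) with hF'
  have hchargeU : charge G h Finset.univ k = ∑ S ∈ F, hProd h S := rfl
  have hcharge' : ∀ j : V, charge G h (Finset.univ \ Kj j) (k - 1)
      = ∑ S ∈ F' j, hProd h S := fun j => rfl
  have part0 : ∑ S ∈ F.filter (fun S => S ∩ Ks = ∅), hProd h S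
      = charge G h (Finset.univ \ Ks) k := by
    have hrfl : charge G h (Finset.univ \ Ks) k = ∑ S ∈ Finset.univ.filter
        (fun S : Finset V => S ⊆ Finset.univ \ Ks ∧ IsIndep G S ∧ S.card = k),
        hProd h S := rfl
    rw [hrfl]
    refine Finset.sum_congr ?_ fun _ _ => rfl
    rw [hF, Finset.filter_filter]
    ext S
    simp only [Finset.mem_filter, Finset.mem_univ, true_and, Finset.subset_sdiff]
    constructor
    · rintro ⟨⟨-, hind, hcard⟩, hint⟩
      exact ⟨⟨Finset.subset_univ S, Finset.disjoint_iff_inter_eq_empty.2 hint⟩, hind, hcard⟩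
    · rintro ⟨⟨-, hdisj⟩, hind, hcard⟩
      exact ⟨⟨Finset.subset_univ S, hind, hcard⟩, Finset.disjoint_iff_inter_eq_empty.1 hdisj⟩
  have hmemF : ∀ S : Finset V, S ∈ F ↔ IsIndep G S ∧ S.card = k := by
    intro S
    rw [hF, Finset.mem_filter]
    simp [Finset.subset_univ]
  have hmemF' : ∀ (j : V) (S : Finset V),
      S ∈ F' j ↔ (∀ v ∈ S, v ∉ Kj j) ∧ IsIndep G S ∧ S.card = k - 1 := by
    intro j S
    rw [hF', Finset.mem_filter]
    simp only [Finset.mem_univ, true_and, Finset.subset_iff, Finset.mem_sdiff]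
  have part2 : ∑ S ∈ F.filter (fun S => ¬ S ∩ Ks = ∅), hProd h S
      = ∑ j ∈ Ks, ∑ S ∈ (F' j).filter (fun S => S ∩ Ks = ∅), hProd h S * h j := by
    have hdisj : (Ks : Set V).PairwiseDisjoint (fun j => F.filter (fun S => j ∈ S)) := by
      intro j1 h1 j2 h2 hne
      refine Finset.disjoint_left.2 fun S hS1 hS2 => ?_
      obtain ⟨hmem1, hj1⟩ := Finset.mem_filter.1 hS1
      obtain ⟨-, hj2⟩ := Finset.mem_filter.1 hS2
      obtain ⟨hind, -⟩ := (hmemF S).1 hmem1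
      exact hne (huniq hind hj1 h1 hj2 h2)
    have hbi : F.filter (fun S => ¬ S ∩ Ks = ∅)
        = Ks.biUnion (fun j => F.filter (fun S => j ∈ S)) := by
      ext S
      simp only [Finset.mem_filter, Finset.mem_biUnion]
      constructor
      · rintro ⟨hSF, hne⟩
        obtain ⟨j, hj⟩ := Finset.nonempty_iff_ne_empty.2 hne
        exact ⟨j, (Finset.mem_inter.1 hj).2, hSF, (Finset.mem_inter.1 hj).1⟩
      · rintro ⟨j, hjKs, hSF, hjS⟩
        refine ⟨hSF, fun hemp => ?_⟩
        have hmem : j ∈ S ∩ Ks := Finset.mem_inter.2 ⟨hjS, hjKs⟩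
        rw [hemp] at hmem
        exact absurd hmem (Finset.notMem_empty j)
    rw [hbi, Finset.sum_biUnion hdisj]
    refine Finset.sum_congr rfl fun j hjKs => ?_
    refine Finset.sum_bij' (fun S _ => S.erase j) (fun S _ => insert j S) ?_ ?_ ?_ ?_ ?_
    · -- erase lands in the target family
      intro S hS
      obtain ⟨hSF, hjS⟩ := Finset.mem_filter.1 hS
      obtain ⟨hind, hcard⟩ := (hmemF S).1 hSF
      refine Finset.mem_filter.2 ⟨(hmemF' j _).2 ⟨?_, indep_subset (Finset.erase_subset j S) hind, ?_⟩, ?_⟩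
      · intro v hv
        obtain ⟨hvj, hvS⟩ := Finset.mem_erase.1 hv
        rw [hmemKj]
        rintro (rfl | ⟨hadj, -⟩)
        · exact hvj rfl
        · exact hind j hjS v hvS hadj
      · rw [Finset.card_erase_of_mem hjS, hcard]
      · refine Finset.eq_empty_iff_forall_notMem.2 fun w hw => ?_
        obtain ⟨hwS, hwKs⟩ := Finset.mem_inter.1 hw
        obtain ⟨hwj, hwS'⟩ := Finset.mem_erase.1 hwS
        exact hwj (huniq hind hwS' hwKs hjS hjKs)
    · -- insert lands in the source family
      intro S hS
      obtain ⟨hSF', hSempty⟩ := Finset.mem_filter.1 hS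
      obtain ⟨hnotKj, hind, hcard⟩ := (hmemF' j S).1 hSF'
      have hjnot : j ∉ S := fun hjS =>
        hnotKj j hjS (Finset.mem_insert_self j _)
      have hnadj : ∀ v ∈ S, ¬ G.Adj j v := by
        intro v hv hadj
        have hvKs : v ∈ Ks := by
          by_contra hvKs
          exact hnotKj v hv ((hmemKj j v).2 (Or.inr ⟨hadj, hvKs⟩))
        have : v ∈ S ∩ Ks := Finset.mem_inter.2 ⟨hv, hvKs⟩
        rw [hSempty] at this
        exact absurd this (Finset.notMem_empty v)
      show insert j S ∈ F.filter (fun S => j ∈ S)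
      refine Finset.mem_filter.2 ⟨(hmemF _).2 ⟨indep_insert hind hnadj, ?_⟩,
        Finset.mem_insert_self j S⟩
      rw [Finset.card_insert_of_notMem hjnot, hcard, hk1]
    · intro S hS
      exact Finset.insert_erase (Finset.mem_filter.1 hS).2
    · intro S hS
      refine Finset.erase_insert fun hjS => ?_
      obtain ⟨hSF', -⟩ := Finset.mem_filter.1 hS
      exact ((hmemF' j S).1 hSF').1 j hjS (Finset.mem_insert_self j _)
    · intro S hS
      obtain ⟨hSF, hjS⟩ := Finset.mem_filter.1 hS
      obtain ⟨hind, -⟩ := (hmemF S).1 hSF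
      conv_lhs => rw [← Finset.insert_erase hjS]
      exact hProd_insert hcomm (Finset.notMem_erase j S)
        (by rw [Finset.insert_erase hjS]; exact hind)
  have key : ∀ (j : V) (S : Finset V), j ∈ Ks →
      S ∈ (F' j).filter (fun T => ¬ T ∩ Ks = ∅) →
      ∀ u ∈ S ∩ Ks,
      u ∈ Ks ∧ (insert j (S.erase u)) ∈ (F' u).filter (fun T => ¬ T ∩ Ks = ∅) ∧
      (∀ w ∈ (insert j (S.erase u)) ∩ Ks, w = j) ∧
      insert u ((insert j (S.erase u)).erase j) = S ∧
      u ≠ j ∧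
      hProd h S * h j + hProd h (insert j (S.erase u)) * h u = 0 := by
    intro j S hjKs hSmem u hu
    obtain ⟨hSF', hSne⟩ := Finset.mem_filter.1 hSmem
    obtain ⟨hnotKj, hind, hcard⟩ := (hmemF' j S).1 hSF'
    obtain ⟨huS, huKs⟩ := Finset.mem_inter.1 hu
    have hjS : j ∉ S := fun hjS => hnotKj j hjS (Finset.mem_insert_self j _)
    have hune : u ≠ j := fun hje => hjS (hje ▸ huS)
    have hadjuj : G.Adj u j := hclq u huKs j hjKs hune
    set T := S.erase u with hT
    have huT : u ∉ T := Finset.notMem_erase u S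
    have hTsub : T ⊆ S := Finset.erase_subset u S
    have hjT : j ∉ T := fun hjT => hjS (hTsub hjT)
    have hindT : IsIndep G T := indep_subset hTsub hind
    have honly : ∀ w ∈ S, w ∈ Ks → w = u := fun w hwS hwKs =>
      huniq hind hwS hwKs huS huKs
    have hTKs : ∀ w ∈ T, w ∉ Ks := fun w hwT hwKs =>
      huT ((honly w (hTsub hwT) hwKs) ▸ hwT)
    have hjTnadj : ∀ v ∈ T, ¬ G.Adj j v := by
      intro v hvT hadj
      have hvS := hTsub hvT
      have hvKs : v ∈ Ks := by
        by_contra hvKs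
        exact hnotKj v hvS ((hmemKj j v).2 (Or.inr ⟨hadj, hvKs⟩))
      exact hTKs v hvT hvKs
    have hindjT : IsIndep G (insert j T) := indep_insert hindT hjTnadj
    have hunadj : ∀ v ∈ T, ¬ G.Adj u v := fun v hvT => hind u huS v (hTsub hvT)
    have hk2 : 1 ≤ k - 1 := hcard ▸ Finset.card_pos.2 ⟨u, huS⟩
    have hcardT : T.card = k - 1 - 1 := by
      rw [hT, Finset.card_erase_of_mem huS, hcard]
    have hcardjT : (insert j T).card = k - 1 := by
      rw [Finset.card_insert_of_notMem hjT, hcardT]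
      omega
    have hjmem : j ∈ (insert j T) ∩ Ks :=
      Finset.mem_inter.2 ⟨Finset.mem_insert_self j T, hjKs⟩
    refine ⟨huKs, ?_, ?_, ?_, hune, ?_⟩
    · refine Finset.mem_filter.2 ⟨(hmemF' u _).2 ⟨?_, hindjT, hcardjT⟩, ?_⟩
      · intro v hv
        rw [hmemKj]
        rcases Finset.mem_insert.1 hv with rfl | hvT
        · rintro (rfl | ⟨-, hnKs⟩)
          · exact hune rfl
          · exact hnKs hjKs
        · rintro (rfl | ⟨hadj, -⟩)
          · exact huT hvT
          · exact hunadj v hvT hadj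
      · intro hemp
        rw [hemp] at hjmem
        exact absurd hjmem (Finset.notMem_empty j)
    · intro w hw
      obtain ⟨hwmem, hwKs⟩ := Finset.mem_inter.1 hw
      rcases Finset.mem_insert.1 hwmem with rfl | hwT
      · rfl
      · exact absurd hwKs (hTKs w hwT)
    · rw [Finset.erase_insert hjT, hT, Finset.insert_erase huS]
    · have hS_eq : S = insert u T := (Finset.insert_erase huS).symm
      have hPS : hProd h S = hProd h T * h u := by
        conv_lhs => rw [hS_eq]
        exact hProd_insert hcomm huT (hS_eq ▸ hind)
      have hPjT : hProd h (insert j T) = hProd h T * h j :=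
        hProd_insert hcomm hjT hindjT
      rw [hPS, hPjT, mul_assoc, mul_assoc, ← mul_add, hanti u j hadjuj,
        neg_add_cancel, mul_zero]
  have part3 : ∑ j ∈ Ks, ∑ S ∈ (F' j).filter (fun S => ¬ S ∩ Ks = ∅),
      hProd h S * h j = 0 := by
    rw [Finset.sum_sigma' Ks (fun j => (F' j).filter (fun S => ¬ S ∩ Ks = ∅))
      (fun j S => hProd h S * h j)]
    refine Finset.sum_involution
      (fun x _ => if hne : (x.2 ∩ Ks).Nonempty
        then ⟨hne.choose, insert x.1 (x.2.erase hne.choose)⟩ else x)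
      ?_ ?_ ?_ ?_
    · rintro ⟨j, S⟩ hx
      obtain ⟨hx1, hx2⟩ := Finset.mem_sigma.1 hx
      have hne : (S ∩ Ks).Nonempty :=
        Finset.nonempty_iff_ne_empty.2 (Finset.mem_filter.1 hx2).2
      dsimp only
      rw [dif_pos hne]
      exact (key j S hx1 hx2 hne.choose hne.choose_spec).2.2.2.2.2
    · rintro ⟨j, S⟩ hx -
      obtain ⟨hx1, hx2⟩ := Finset.mem_sigma.1 hx
      have hne : (S ∩ Ks).Nonempty :=
        Finset.nonempty_iff_ne_empty.2 (Finset.mem_filter.1 hx2).2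
      dsimp only
      rw [dif_pos hne]
      intro heq
      exact (key j S hx1 hx2 hne.choose hne.choose_spec).2.2.2.2.1
        (congrArg Sigma.fst heq)
    · rintro ⟨j, S⟩ hx
      obtain ⟨hx1, hx2⟩ := Finset.mem_sigma.1 hx
      have hne : (S ∩ Ks).Nonempty :=
        Finset.nonempty_iff_ne_empty.2 (Finset.mem_filter.1 hx2).2
      dsimp only
      rw [dif_pos hne]
      obtain ⟨huKs, hmem, -, -, -, -⟩ := key j S hx1 hx2 hne.choose hne.choose_spec
      exact Finset.mem_sigma.2 ⟨huKs, hmem⟩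
    · rintro ⟨j, S⟩ hx
      obtain ⟨hx1, hx2⟩ := Finset.mem_sigma.1 hx
      have hne : (S ∩ Ks).Nonempty :=
        Finset.nonempty_iff_ne_empty.2 (Finset.mem_filter.1 hx2).2
      obtain ⟨huKs, hmem, hwuniq, hins, hune, -⟩ :=
        key j S hx1 hx2 hne.choose hne.choose_spec
      dsimp only
      rw [dif_pos hne]
      dsimp only
      have hne' : ((insert j (S.erase hne.choose)) ∩ Ks).Nonempty :=
        Finset.nonempty_iff_ne_empty.2 (Finset.mem_filter.1 hmem).2
      rw [dif_pos hne']
      have hcj : hne'.choose = j := hwuniq hne'.choose hne'.choose_spec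
      rw [hcj, hins]
  calc charge G h Finset.univ k
      = ∑ S ∈ F.filter (fun S => S ∩ Ks = ∅), hProd h S
        + ∑ S ∈ F.filter (fun S => ¬ S ∩ Ks = ∅), hProd h S := by
        rw [hchargeU, Finset.sum_filter_add_sum_filter_not]
    _ = charge G h (Finset.univ \ Ks) k
        + (∑ j ∈ Ks, ∑ S ∈ (F' j).filter (fun S => S ∩ Ks = ∅), hProd h S * h j
          + ∑ j ∈ Ks, ∑ S ∈ (F' j).filter (fun S => ¬ S ∩ Ks = ∅), hProd h S * h j) := by
        rw [part0, part2, part3, add_zero]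
    _ = charge G h (Finset.univ \ Ks) k
        + ∑ j ∈ Ks, charge G h (Finset.univ \ Kj j) (k - 1) * h j := by
        rw [← Finset.sum_add_distrib]
        congr 1
        refine Finset.sum_congr rfl fun j _ => ?_
        rw [hcharge' j, Finset.sum_mul, Finset.sum_filter_add_sum_filter_not]
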